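/- arXiv:2209.05145 — 2 statements merged into one kernel-verified Lean document; each statement's English description precedes it below -/
import Mathlib

section
/- Define a graph 𝒢 on a finite family F of independent sets of a graph G, each of size at least k, with an edge between I, I' ∈ F whenever |I ∩ I'| ≥ k − 1. If I, I' ∈ F are adjacent in 𝒢, then any k-sized independent subset X ⊆ I can be transformed into some k-sized independent subset X' ⊆ I' by a sequence of at most k token jumps, where a token jump replaces one vertex of the current k-sized independent set by another vertex of G while maintaining independence. -/
/-- A finset of vertices is independent if no two of its members are adjacent. -/
def IsIndepFinset {V : Type*} (G : SimpleGraph V) (s : Finset V) : Prop :=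
  ∀ u ∈ s, ∀ v ∈ s, ¬ G.Adj u v

/-- A single token jump between `k`-sized independent sets: one vertex is
replaced by another while maintaining independence. -/
def TokenJump {V : Type*} [DecidableEq V] (G : SimpleGraph V) (k : ℕ)
    (A B : Finset V) : Prop :=
  A.card = k ∧ B.card = k ∧ IsIndepFinset G A ∧ IsIndepFinset G B ∧
    (A ∩ B).card = k - 1

lemma indep_subset {V : Type*} {G : SimpleGraph V} {s t : Finset V}
    (h : IsIndepFinset G t) (hst : s ⊆ t) : IsIndepFinset G s :=
  fun u hu v hv => h u (hst hu) v (hst hv)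

lemma chain_in_indep {V : Type*} [DecidableEq V] (G : SimpleGraph V) (k : ℕ) :
    ∀ (n : ℕ) (J X T : Finset V), IsIndepFinset G J → X ⊆ J → T ⊆ J →
    X.card = k → T.card = k → (T \ X).card = n →
    ∃ r ≤ n, ∃ A : ℕ → Finset V, A 0 = X ∧ A r = T ∧
      ∀ i < r, TokenJump G k (A i) (A (i + 1)) := by
  intro n
  induction n with
  | zero =>
    intro J X T hJ hXJ hTJ hXc hTc hd
    have hTX : T ⊆ X := by
      rw [Finset.card_eq_zero, Finset.sdiff_eq_empty_iff_subset] at hd; exact hd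
    have : T = X := Finset.eq_of_subset_of_card_le hTX (by omega)
    exact ⟨0, Nat.zero_le _, fun _ => X, rfl, this.symm ▸ rfl, by omega⟩
  | succ n ih =>
    intro J X T hJ hXJ hTJ hXc hTc hd
    have hbne : (T \ X).Nonempty := by
      rw [← Finset.card_pos, hd]; omega
    obtain ⟨b, hb⟩ := hbne
    have hbT : b ∈ T := (Finset.mem_sdiff.mp hb).1
    have hbX : b ∉ X := (Finset.mem_sdiff.mp hb).2
    have hane : (X \ T).Nonempty := by
      by_contra h
      rw [Finset.not_nonempty_iff_eq_empty, Finset.sdiff_eq_empty_iff_subset] at h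
      have : X = T := Finset.eq_of_subset_of_card_le h (by omega)
      exact hbX (this ▸ hbT)
    obtain ⟨a, ha⟩ := hane
    have haX : a ∈ X := (Finset.mem_sdiff.mp ha).1
    have haT : a ∉ T := (Finset.mem_sdiff.mp ha).2
    have hk1 : 1 ≤ k := by rw [← hXc]; exact Finset.card_pos.mpr ⟨a, haX⟩
    set X' : Finset V := insert b (X.erase a) with hX'
    have hbe : b ∉ X.erase a := fun h => hbX (Finset.mem_of_mem_erase h)
    have hX'c : X'.card = k := by
      rw [hX', Finset.card_insert_of_notMem hbe, Finset.card_erase_of_mem haX, hXc]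
      omega
    have hX'J : X' ⊆ J := by
      intro x hx
      rcases Finset.mem_insert.mp hx with h | h
      · exact hTJ (h ▸ hbT)
      · exact hXJ (Finset.mem_of_mem_erase h)
    have hdiff : (T \ X').card = n := by
      have heq : T \ X' = (T \ X).erase b := by
        ext t
        by_cases hta : t = a
        · subst hta; simp [haT]
        · simp only [hX', Finset.mem_sdiff, Finset.mem_insert, Finset.mem_erase, hta]
          tauto
      rw [heq, Finset.card_erase_of_mem hb, hd]; omega
    have hjump : TokenJump G k X X' := by
      refine ⟨hXc, hX'c, indep_subset hJ hXJ, indep_subset hJ hX'J, ?_⟩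
      have hint : X ∩ X' = X.erase a := by
        rw [hX']
        ext x
        simp only [Finset.mem_inter, Finset.mem_insert, Finset.mem_erase]
        constructor
        · rintro ⟨hx, h | h⟩
          · exact absurd (h ▸ hx) hbX
          · exact h
        · rintro ⟨hxa, hx⟩; exact ⟨hx, Or.inr ⟨hxa, hx⟩⟩
      rw [hint, Finset.card_erase_of_mem haX, hXc]
    obtain ⟨r, hr, A, hA0, hAr, hAj⟩ := ih J X' T hJ hX'J hTJ hX'c hTc hdiff
    refine ⟨r + 1, by omega, fun i => if i = 0 then X else A (i - 1), by simp, by simp [hAr], ?_⟩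
    intro i hi
    rcases Nat.eq_zero_or_pos i with rfl | hpos
    · have h : TokenJump G k X (A 0) := hA0 ▸ hjump
      simpa using h
    · have h1 : ¬ (i = 0) := by omega
      have h2 : ¬ (i + 1 = 0) := by omega
      simp only [if_neg h1, if_neg h2]
      
      have e : i + 1 - 1 = (i - 1) + 1 := by omega
      rw [e]
      exact hAj (i - 1) (by omega)

/-- If `I` and `I'` are independent sets of size at least `k` with
`|I ∩ I'| ≥ k - 1`, then any `k`-sized subset `X ⊆ I` can be transformed into
some `k`-sized subset `X' ⊆ I'` by at most `k` token jumps. -/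
theorem jump_between_covering_sets {V : Type*} [DecidableEq V]
    (G : SimpleGraph V) (k : ℕ) (I I' : Finset V)
    (hI : IsIndepFinset G I) (hI' : IsIndepFinset G I')
    (hIcard : k ≤ I.card) (hI'card : k ≤ I'.card)
    (hmeet : k - 1 ≤ (I ∩ I').card)
    (X : Finset V) (hX : X ⊆ I) (hXcard : X.card = k) :
    ∃ X' : Finset V, X' ⊆ I' ∧ X'.card = k ∧
      ∃ r ≤ k, ∃ A : ℕ → Finset V, A 0 = X ∧ A r = X' ∧
        ∀ i < r, TokenJump G k (A i) (A (i + 1)) := by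
  rcases Nat.eq_zero_or_pos k with rfl | hk
  · have hXe : X = ∅ := Finset.card_eq_zero.mp hXcard
    exact ⟨∅, Finset.empty_subset _, Finset.card_empty, 0, le_refl _,
      fun _ => ∅, hXe.symm, rfl, by omega⟩
  -- pick Y ⊆ I ∩ I' of size k - 1
  obtain ⟨Y, hYsub, hYcard⟩ := Finset.exists_subset_card_eq hmeet
  have hYI : Y ⊆ I := hYsub.trans Finset.inter_subset_left
  have hYI' : Y ⊆ I' := hYsub.trans Finset.inter_subset_right
  -- pick u ∈ X \ Y
  have hune : (X \ Y).Nonempty := by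
    rw [← Finset.card_pos]
    have := Finset.card_le_card_sdiff_add_card (s := X) (t := Y)
    omega
  obtain ⟨u, hu⟩ := hune
  have huX : u ∈ X := (Finset.mem_sdiff.mp hu).1
  have huY : u ∉ Y := (Finset.mem_sdiff.mp hu).2
  set T : Finset V := insert u Y with hT
  have hTc : T.card = k := by
    rw [hT, Finset.card_insert_of_notMem huY, hYcard]; omega
  have hTI : T ⊆ I := by
    intro x hx
    rcases Finset.mem_insert.mp hx with h | h
    · exact hX (h ▸ huX)
    · exact hYI h
  obtain ⟨r1, hr1, A, hA0, hAr, hAj⟩ :=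
    chain_in_indep G k (T \ X).card I X T hI hX hTI hXcard hTc rfl
  have hdle : (T \ X).card ≤ k - 1 := by
    have hsub : T \ X ⊆ Y := by
      intro x hx
      rcases Finset.mem_sdiff.mp hx with ⟨hxT, hxX⟩
      rcases Finset.mem_insert.mp hxT with h | h
      · exact absurd (h ▸ huX) hxX
      · exact h
    calc (T \ X).card ≤ Y.card := Finset.card_le_card hsub
      _ = k - 1 := hYcard
  by_cases huI' : u ∈ I'
  · refine ⟨T, ?_, hTc, r1, by omega, A, hA0, hAr, hAj⟩
    intro x hx
    rcases Finset.mem_insert.mp hx with h | h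
    · exact h ▸ huI'
    · exact hYI' h
  · -- pick w ∈ I' \ Y and do one more jump
    have hwne : (I' \ Y).Nonempty := by
      rw [← Finset.card_pos]
      have := Finset.card_le_card_sdiff_add_card (s := I') (t := Y)
      omega
    obtain ⟨w, hw⟩ := hwne
    have hwI' : w ∈ I' := (Finset.mem_sdiff.mp hw).1
    have hwY : w ∉ Y := (Finset.mem_sdiff.mp hw).2
    have hwu : w ≠ u := fun h => huI' (h ▸ hwI')
    set X' : Finset V := insert w Y with hX'
    have hX'c : X'.card = k := by
      rw [hX', Finset.card_insert_of_notMem hwY, hYcard]; omega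
    have hX'I' : X' ⊆ I' := by
      intro x hx
      rcases Finset.mem_insert.mp hx with h | h
      · exact h ▸ hwI'
      · exact hYI' h
    have hjump : TokenJump G k T X' := by
      refine ⟨hTc, hX'c, indep_subset hI hTI, indep_subset hI' hX'I', ?_⟩
      have hint : T ∩ X' = Y := by
        ext x
        simp only [hT, hX', Finset.mem_inter, Finset.mem_insert]
        constructor
        · rintro ⟨h1 | h1, h2 | h2⟩
          · exact absurd (h2.symm.trans h1) hwu
          · exact absurd (h1 ▸ h2) huY
          · exact absurd (h2 ▸ h1) hwY
          · exact h1
        · intro h; exact ⟨Or.inr h, Or.inr h⟩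
      rw [hint, hYcard]
    refine ⟨X', hX'I', hX'c, r1 + 1, by omega,
      fun i => if i ≤ r1 then A i else X', by simp [hA0], ?_, ?_⟩
    · simp
    · intro i hi
      rcases Nat.lt_or_ge i r1 with hlt | hge
      · have e1 : i ≤ r1 := by omega
        have e2 : i + 1 ≤ r1 := by omega
        simp only [if_pos e1, if_pos e2]
        exact hAj i hlt
      · have hieq : i = r1 := by omega
        subst hieq
        have e2 : ¬ (i + 1 ≤ i) := by omega
        simp only [le_refl, if_pos, if_neg e2]
        exact hAr ▸ hjump
end

section
/- Let G be a graph, σ a finite sequence of 2ℓ vertex moves, and V(σ) the set of touched vertices with |V(σ)| ≤ 2ℓ. If every vertex of V(σ) is colored red, every vertex of N(V(σ)) (neighbors outside V(σ)) is colored blue, and C is a connected component of the subgraph induced by the red vertices with more than 2ℓ vertices, then V(σ) ∩ V(C) = ∅. -/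
lemma walk_stays {V : Type*} (G : SimpleGraph V) (red : V → Prop) (Vσ : Set V)
    (hblue : ∀ v ∉ Vσ, (∃ u ∈ Vσ, G.Adj u v) → ¬ red v)
    {a b : {v | red v}} (w : (G.induce {v | red v}).Walk a b)
    (ha : (a : V) ∈ Vσ) : (b : V) ∈ Vσ := by
  induction w with
  | nil => exact ha
  | @cons x y z h p ih =>
    apply ih
    by_contra hc
    exact hblue _ hc ⟨_, ha, h⟩ y.2

/-- Random separation lemma: if every vertex of `Vσ` (with `|Vσ| ≤ 2ℓ`) is
colored red and every neighbor of `Vσ` outside `Vσ` is colored blue, then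
`Vσ` avoids every connected component of the red induced subgraph having more
than `2ℓ` vertices. -/
theorem successful_coloring_avoids_big_red_components {V : Type*}
    (G : SimpleGraph V) (red : V → Prop) (ℓ : ℕ) (Vσ : Set V)
    (hsize : Vσ.ncard ≤ 2 * ℓ) (hfin : Vσ.Finite)
    (hred : Vσ ⊆ {v | red v})
    (hblue : ∀ v ∉ Vσ, (∃ u ∈ Vσ, G.Adj u v) → ¬ red v)
    (C : (G.induce {v | red v}).ConnectedComponent)
    (hCbig : 2 * ℓ < (Subtype.val '' C.supp).ncard) :
    Disjoint Vσ (Subtype.val '' C.supp) := by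
  rw [Set.disjoint_left]
  rintro v hvσ ⟨a, haC, rfl⟩
  have hsub : Subtype.val '' C.supp ⊆ Vσ := by
    rintro _ ⟨b, hbC, rfl⟩
    have : (G.induce {v | red v}).Reachable a b := by
      rw [SimpleGraph.ConnectedComponent.mem_supp_iff] at haC hbC
      exact SimpleGraph.ConnectedComponent.exact (haC.trans hbC.symm)
    obtain ⟨w⟩ := this
    exact walk_stays G red Vσ hblue w hvσ
  exact absurd (le_trans (Set.ncard_le_ncard hsub hfin) hsize) (not_le.mpr hCbig)
end
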